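/- There exists a subset A of B_1(2^ω, 2) (with the pointwise convergence topology) which is homeomorphic to the Baire space ω^ω, which is not uniformly recoverable, and yet the evaluation map φ : 2^ω × A → 2, φ(x,f) = f(x), is Baire class one. -/

import Mathlib

open Filter Topology Set Classical

noncomputable section
open scoped Classical

/-- A set is Fσ if it is a countable union of closed sets. -/
def IsFsigma {X : Type*} [TopologicalSpace X] (s : Set X) : Prop :=
  ∃ F : ℕ → Set X, (∀ n, IsClosed (F n)) ∧ s = ⋃ n, F n

/-- A function is Baire class one if the preimage of every open set is Fσ. -/
def BaireClassOneFn {X Y : Type*} [TopologicalSpace X] [TopologicalSpace Y] (f : X → Y) : Prop :=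
  ∀ U : Set Y, IsOpen U → IsFsigma (f ⁻¹' U)

/-- A countable basis `(W m)` is good if for every open `U` and `x ∈ U` there is `m₀`
such that for all `m ≥ m₀`, `x ∈ W m` implies `W m ⊆ U`. -/
def IsGoodBasis {X : Type*} [TopologicalSpace X] (W : ℕ → Set X) : Prop :=
  TopologicalSpace.IsTopologicalBasis (Set.range W) ∧
  ∀ U : Set X, IsOpen U → ∀ x ∈ U, ∃ m₀, ∀ m ≥ m₀, x ∈ W m → W m ⊆ U

/-- The path to `x` based on the dense sequence `D`, relative to the good basis `W`. -/
noncomputable def pathSeq {X : Type*} (W : ℕ → Set X) (D : ℕ → X) (x : X) : ℕ → X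
  | 0 => D 0
  | n + 1 =>
    if x = pathSeq W D x n then pathSeq W D x n
    else D (sInf {p | ∃ m, x ∈ W m ∧ D p ∈ W m ∧ ∀ k, k ≤ n → pathSeq W D x k ∉ W m})
  termination_by n => n
  decreasing_by all_goals omega

/-- `f` is recoverable with respect to `D` (and the good basis `W`). -/
def RecoverableWith {X Y : Type*} [TopologicalSpace Y] (W : ℕ → Set X) (D : ℕ → X)
    (f : X → Y) : Prop :=
  ∀ x : X, Tendsto (fun n => f (pathSeq W D x n)) atTop (𝓝 (f x))

/-!
For `a : ℕ → ℕ`, `code a ∈ 2^ω` is `1 0^(a 0 + 1) 1 0^(a 1 + 1) 1 ⋯`, with ones at the positions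
`mark a k`, and `finCode a m` keeps only its first `m + 1` ones. The set `A` consists of the
indicators `f_a` of the countable sets `{finCode a m | m}`. Since `f_a (finCode b m)` tests
whether `a` and `b` agree below `m`, `a ↦ f_a` is an embedding of the Baire space. The map
`(x, a) ↦ f_a x` is Baire class one: its true fibre is a countable union of graphs of continuous
maps, and, as `finCode a m → code a`, its false fibre is the graph of `code` together with an
open set.

Suppose all `f_a` are recoverable with respect to `D`. Each `finCode a m` is isolated in the
true fibre of `f_a`, so the path to it must eventually reach it: it lies in the range of `D`.
Choosing `a m` by diagonalisation against `D` and the basis, the path to `code a` (which never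
reaches it) is forced through every `finCode a m`, so `f_a` is true infinitely often along the
path although `f_a (code a) = false`.
-/

theorem isFsigma_iff_isGδ_compl {X : Type*} [TopologicalSpace X] {s : Set X} :
    IsFsigma s ↔ IsGδ sᶜ := by
  rw [isGδ_iff_eq_iInter_nat]
  constructor
  · rintro ⟨F, hF, rfl⟩
    exact ⟨fun n => (F n)ᶜ, fun n => (hF n).isOpen_compl, by rw [compl_iUnion]⟩
  · rintro ⟨U, hU, hs⟩
    refine ⟨fun n => (U n)ᶜ, fun n => (hU n).isClosed_compl, ?_⟩
    rw [← compl_iInter, ← hs, compl_compl]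

section IsFsigma

variable {X : Type*} [TopologicalSpace X]

theorem IsClosed.isFsigma {s : Set X} (hs : IsClosed s) : IsFsigma s :=
  isFsigma_iff_isGδ_compl.2 hs.isOpen_compl.isGδ

theorem IsOpen.isFsigma [TopologicalSpace.PseudoMetrizableSpace X] {s : Set X} (hs : IsOpen s) :
    IsFsigma s :=
  isFsigma_iff_isGδ_compl.2 hs.isClosed_compl.isGδ

theorem IsFsigma.iUnion {ι : Sort*} [Countable ι] {s : ι → Set X} (hs : ∀ i, IsFsigma (s i)) :
    IsFsigma (⋃ i, s i) := by
  simp only [isFsigma_iff_isGδ_compl, compl_iUnion] at hs ⊢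
  exact .iInter hs

theorem IsFsigma.union {s t : Set X} (hs : IsFsigma s) (ht : IsFsigma t) : IsFsigma (s ∪ t) := by
  rw [isFsigma_iff_isGδ_compl, compl_union] at *
  exact hs.inter ht

theorem IsFsigma.preimage {Y : Type*} [TopologicalSpace Y] {f : X → Y} (hf : Continuous f)
    {s : Set Y} (hs : IsFsigma s) : IsFsigma (f ⁻¹' s) := by
  rw [isFsigma_iff_isGδ_compl, ← preimage_compl] at *
  exact hs.preimage hf

theorem BaireClassOneFn.comp_continuous {Y Z : Type*} [TopologicalSpace Y] [TopologicalSpace Z]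
    {f : Y → Z} {g : X → Y} (hf : BaireClassOneFn f) (hg : Continuous g) :
    BaireClassOneFn (f ∘ g) :=
  fun U hU => (hf U hU).preimage hg

theorem baireClassOneFn_of_isFsigma_preimage_singleton {Y : Type*} [TopologicalSpace Y]
    [Countable Y] {f : X → Y} (hf : ∀ y, IsFsigma (f ⁻¹' {y})) : BaireClassOneFn f := by
  intro U _
  rw [← biUnion_preimage_singleton]
  exact .iUnion fun y => .iUnion fun _ => hf y

end IsFsigma

open PiNat

section Cylinder

variable {E : ℕ → Type*} [∀ n, TopologicalSpace (E n)] [∀ n, DiscreteTopology (E n)]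

theorem PiNat.hasBasis_nhds_cylinder (x : ∀ n, E n) :
    (𝓝 x).HasBasis (fun _ => True) (cylinder x) := by
  refine ⟨fun U => ⟨fun hU => ?_, fun ⟨n, _, hn⟩ =>
    mem_of_superset ((isOpen_cylinder E x n).mem_nhds (self_mem_cylinder x n)) hn⟩⟩
  obtain ⟨_, ⟨y, n, rfl⟩, hx, hU⟩ := (isTopologicalBasis_cylinders E).mem_nhds_iff.1 hU
  exact ⟨n, trivial, mem_cylinder_iff_eq.1 hx ▸ hU⟩

theorem PiNat.continuous_of_forall_mem_cylinder {Y : Type*} [TopologicalSpace Y]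
    {g : (∀ n, E n) → Y} (M : ℕ) (hg : ∀ x, ∀ y ∈ cylinder x M, g y = g x) : Continuous g :=
  continuous_iff_continuousAt.2 fun x => continuousAt_const.congr <|
    ((hasBasis_nhds_cylinder x).eventually_iff.2 ⟨M, trivial, fun y hy => (hg x y hy).symm⟩)

end Cylinder

def mark (a : ℕ → ℕ) : ℕ → ℕ
  | 0 => 0
  | k + 1 => mark a k + a k + 2

def finCode (a : ℕ → ℕ) (m n : ℕ) : Bool := decide (∃ k ≤ m, mark a k = n)

def code (a : ℕ → ℕ) (n : ℕ) : Bool := decide (∃ k, mark a k = n)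

section Code

variable {a b : ℕ → ℕ} {k m m' n : ℕ}

theorem mark_succ (a : ℕ → ℕ) (k : ℕ) : mark a (k + 1) = mark a k + a k + 2 := rfl

theorem mark_strictMono (a : ℕ → ℕ) : StrictMono (mark a) :=
  strictMono_nat_of_lt_succ fun k => by rw [mark_succ]; omega

theorem le_mark (a : ℕ → ℕ) (k : ℕ) : k ≤ mark a k := (mark_strictMono a).id_le k

theorem lt_mark_succ (a : ℕ → ℕ) (k : ℕ) : a k < mark a (k + 1) := by rw [mark_succ]; omega

theorem lt_mark_succ_of_le (h : n ≤ m) : n < mark a (m + 1) := by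
  have := le_mark a (m + 1)
  omega

theorem mark_congr (h : ∀ i < k, a i = b i) : mark a k = mark b k := by
  induction k with
  | zero => rfl
  | succ k ih => rw [mark_succ, mark_succ, ih fun i hi => h i (by omega), h k (by omega)]

theorem finCode_eq_true_iff : finCode a m n = true ↔ ∃ k ≤ m, mark a k = n :=
  decide_eq_true_iff

theorem code_eq_true_iff : code a n = true ↔ ∃ k, mark a k = n :=
  decide_eq_true_iff

theorem finCode_apply_mark : finCode a m (mark a k) = decide (k ≤ m) := by
  simp [finCode, (mark_strictMono a).injective.eq_iff]

theorem finCode_eq_code_of_lt (h : n < mark a (m + 1)) : finCode a m n = code a n := by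
  refine Bool.eq_iff_iff.2 (finCode_eq_true_iff.trans (code_eq_true_iff.trans ?_).symm)
  refine ⟨fun ⟨k, hk⟩ => ⟨k, ?_, hk⟩, fun ⟨k, _, hk⟩ => ⟨k, hk⟩⟩
  exact Nat.lt_succ_iff.1 ((mark_strictMono a).lt_iff_lt.1 (hk ▸ h))

theorem code_eq_finCode (a : ℕ → ℕ) (n : ℕ) : code a n = finCode a n n :=
  (finCode_eq_code_of_lt (lt_mark_succ_of_le le_rfl)).symm

theorem finCode_congr (h : ∀ i < m, a i = b i) : finCode a m = finCode b m := by
  funext n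
  refine Bool.eq_iff_iff.2 (finCode_eq_true_iff.trans (Iff.trans ?_ finCode_eq_true_iff.symm))
  refine exists_congr fun k => and_congr_right fun hk => ?_
  rw [mark_congr fun i hi => h i (by omega)]

theorem code_congr (h : ∀ i < n, a i = b i) : code a n = code b n := by
  rw [code_eq_finCode, code_eq_finCode, finCode_congr h]

theorem code_ne_finCode (a b : ℕ → ℕ) (m : ℕ) : code a ≠ finCode b m := by
  intro h
  have hcode : code a (mark a (mark b m + 1)) = true := code_eq_true_iff.2 ⟨_, rfl⟩
  obtain ⟨k, hk, hmark⟩ := finCode_eq_true_iff.1 (h ▸ hcode)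
  have := le_mark a (mark b m + 1)
  have := (mark_strictMono b).monotone hk
  omega

theorem mark_succ_le_of_finCode_eq (h : finCode a m = finCode b m')
    (hk : mark a k = mark b k) (hkm : k < m') : mark a (k + 1) ≤ mark b (k + 1) := by
  have hb : finCode b m' (mark b (k + 1)) = true := by simpa [finCode_apply_mark] using hkm
  obtain ⟨j, -, hj⟩ := finCode_eq_true_iff.1 (h ▸ hb)
  have hkj : k < j := (mark_strictMono a).lt_iff_lt.1 (hj ▸ hk ▸ mark_strictMono b (lt_add_one k))
  exact hj ▸ (mark_strictMono a).monotone hkj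

theorem mark_eq_of_finCode_eq (h : finCode a m = finCode b m') :
    ∀ k ≤ min m m', mark a k = mark b k := by
  intro k hk
  induction k with
  | zero => rfl
  | succ k ih =>
    have hk' := ih (by omega)
    exact le_antisymm (mark_succ_le_of_finCode_eq h hk' (by omega))
      (mark_succ_le_of_finCode_eq h.symm hk'.symm (by omega))

theorem le_of_finCode_eq (h : finCode a m = finCode b m') : m ≤ m' := by
  by_contra! hlt
  have ha : finCode a m (mark a m) = true := by simp [finCode_apply_mark]
  obtain ⟨j, hj, hmark⟩ := finCode_eq_true_iff.1 (h ▸ ha)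
  have := (mark_strictMono b).monotone hj
  have := mark_eq_of_finCode_eq h m' (by omega)
  have := mark_strictMono a hlt
  omega

theorem finCode_inj (h : finCode a m = finCode b m') : m = m' ∧ ∀ i < m, a i = b i := by
  obtain rfl := le_antisymm (le_of_finCode_eq h) (le_of_finCode_eq h.symm)
  refine ⟨rfl, fun i hi => ?_⟩
  have h₁ := mark_eq_of_finCode_eq h i (by omega)
  have h₂ := mark_eq_of_finCode_eq h (i + 1) (by omega)
  rw [mark_succ, mark_succ] at h₂
  omega

theorem eq_of_finCode_mem_cylinder
    (h : finCode a m' ∈ cylinder (finCode a m) (mark a (m + 1) + 1)) : m' = m := by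
  have h₁ := mem_cylinder_iff.1 h (mark a m) (by have := mark_strictMono a (lt_add_one m); omega)
  have h₂ := mem_cylinder_iff.1 h (mark a (m + 1)) (lt_add_one _)
  simp only [finCode_apply_mark, decide_eq_decide] at h₁ h₂
  omega

theorem continuous_finCode (m : ℕ) : Continuous fun a => finCode a m :=
  continuous_pi fun n => continuous_of_forall_mem_cylinder m fun _ _ hb =>
    congrFun (finCode_congr (mem_cylinder_iff.1 hb)) n

theorem continuous_code : Continuous code :=
  continuous_pi fun n => continuous_of_forall_mem_cylinder n fun _ _ hb =>
    code_congr (mem_cylinder_iff.1 hb)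

end Code

def finCodeIndicator (a : ℕ → ℕ) (x : ℕ → Bool) : Bool := decide (x ∈ range (finCode a))

section Indicator

variable {a b : ℕ → ℕ} {m : ℕ} {x : ℕ → Bool}

theorem finCodeIndicator_eq_true_iff : finCodeIndicator a x = true ↔ ∃ m, finCode a m = x :=
  decide_eq_true_iff

theorem finCodeIndicator_finCode :
    finCodeIndicator b (finCode a m) = true ↔ ∀ i < m, a i = b i := by
  rw [finCodeIndicator_eq_true_iff]
  refine ⟨fun ⟨m', h⟩ => ?_, fun h => ⟨m, (finCode_congr h).symm⟩⟩
  obtain ⟨rfl, hab⟩ := finCode_inj h.symm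
  exact hab

theorem finCodeIndicator_code (a b : ℕ → ℕ) : finCodeIndicator b (code a) = false := by
  rw [Bool.eq_false_iff, ne_eq, finCodeIndicator_eq_true_iff, not_exists]
  exact fun m h => code_ne_finCode a b m h.symm

theorem finCodeIndicator_eq_false_iff :
    finCodeIndicator a x = false ↔
      x = code a ∨ ∃ n, x n ≠ code a n ∧ ∀ m < n, x ≠ finCode a m := by
  rw [Bool.eq_false_iff, ne_eq, finCodeIndicator_eq_true_iff, not_exists]
  constructor
  · intro hx
    by_cases hxa : x = code a
    · exact .inl hxa
    obtain ⟨n, hn⟩ := Function.ne_iff.1 hxa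
    exact .inr ⟨n, hn, fun m _ => Ne.symm (hx m)⟩
  · rintro (rfl | ⟨n, hn, hlt⟩) m hm
    · exact code_ne_finCode a a m hm.symm
    rcases lt_or_ge m n with hmn | hnm
    · exact hlt m hmn hm.symm
    · exact hn (hm ▸ finCode_eq_code_of_lt (lt_mark_succ_of_le hnm))

theorem finCodeIndicator_injective : Function.Injective finCodeIndicator := by
  intro a b h
  funext i
  have : finCodeIndicator b (finCode a (i + 1)) = true :=
    h ▸ finCodeIndicator_finCode.2 fun _ _ => rfl
  exact finCodeIndicator_finCode.1 this i (lt_add_one i)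

theorem continuous_finCodeIndicator : Continuous finCodeIndicator := by
  refine continuous_pi fun x => ?_
  by_cases hx : ∃ c m, x = finCode c m
  · obtain ⟨c, m, rfl⟩ := hx
    refine continuous_of_forall_mem_cylinder m fun a b hb => Bool.eq_iff_iff.2 ?_
    simp only [finCodeIndicator_finCode]
    exact forall₂_congr fun i hi => by rw [mem_cylinder_iff.1 hb i hi]
  · push Not at hx
    refine continuous_of_forall_mem_cylinder 0 fun a b _ => ?_
    simp only [finCodeIndicator, mem_range, (hx _ _).symm, exists_false, decide_false]

theorem isEmbedding_finCodeIndicator : IsEmbedding finCodeIndicator := by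
  refine ⟨isInducing_iff_nhds.2 fun a => le_antisymm
    continuous_finCodeIndicator.continuousAt.tendsto.le_comap ?_, finCodeIndicator_injective⟩
  refine (hasBasis_nhds_cylinder a).ge_iff.2 fun n _ => mem_comap.2 ?_
  refine ⟨(fun f : (ℕ → Bool) → Bool => f (finCode a n)) ⁻¹' {true},
    ((continuous_apply _).isOpen_preimage _ (isOpen_discrete _)).mem_nhds ?_, fun b hb => ?_⟩
  · exact finCodeIndicator_finCode.2 fun _ _ => rfl
  · exact mem_cylinder_iff.2 fun i hi => (finCodeIndicator_finCode.1 hb i hi).symm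

theorem baireClassOneFn_finCodeIndicator_uncurry :
    BaireClassOneFn fun p : (ℕ → Bool) × (ℕ → ℕ) => finCodeIndicator p.2 p.1 := by
  refine baireClassOneFn_of_isFsigma_preimage_singleton fun y => ?_
  cases y with
  | false =>
    have hfiber : (fun p : (ℕ → Bool) × (ℕ → ℕ) => finCodeIndicator p.2 p.1) ⁻¹' {false} =
        {p | p.1 = code p.2} ∪ ⋃ n, ({p | p.1 n ≠ code p.2 n} ∩
          ⋂ m ∈ Finset.range n, {p | p.1 ≠ finCode p.2 m}) := by
      ext p
      simp [finCodeIndicator_eq_false_iff]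
    rw [hfiber]
    refine (isClosed_eq continuous_fst (continuous_code.comp continuous_snd)).isFsigma.union
      (.iUnion fun n => IsOpen.isFsigma ?_)
    exact (isOpen_ne_fun ((continuous_apply n).comp continuous_fst)
      ((continuous_apply n).comp (continuous_code.comp continuous_snd))).inter
      (isOpen_biInter_finset fun m _ => isOpen_ne_fun continuous_fst
        ((continuous_finCode m).comp continuous_snd))
  | true =>
    have hfiber : (fun p : (ℕ → Bool) × (ℕ → ℕ) => finCodeIndicator p.2 p.1) ⁻¹' {true} =
        ⋃ m, {p | p.1 = finCode p.2 m} := by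
      ext p
      simp only [mem_preimage, mem_singleton_iff, finCodeIndicator_eq_true_iff, mem_iUnion,
        mem_ofPred_eq]
      exact exists_congr fun m => eq_comm
    rw [hfiber]
    exact .iUnion fun m =>
      (isClosed_eq continuous_fst ((continuous_finCode m).comp continuous_snd)).isFsigma

end Indicator

section PathSeq

variable {X : Type*} (W : ℕ → Set X) (D : ℕ → X) (x : X)

def pathCand (n : ℕ) : Set ℕ :=
  {p | ∃ m, x ∈ W m ∧ D p ∈ W m ∧ ∀ k ≤ n, pathSeq W D x k ∉ W m}

theorem pathSeq_zero : pathSeq W D x 0 = D 0 := by rw [pathSeq]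

variable {x} in
theorem pathSeq_succ_of_ne {n : ℕ} (h : x ≠ pathSeq W D x n) :
    pathSeq W D x (n + 1) = D (sInf (pathCand W D x n)) := by
  rw [pathSeq, if_neg h, pathCand]

theorem pathSeq_mem_range (n : ℕ) : pathSeq W D x n ∈ range D := by
  induction n with
  | zero => exact ⟨0, (pathSeq_zero W D x).symm⟩
  | succ n ih =>
    by_cases h : x = pathSeq W D x n
    · rwa [pathSeq, if_pos h]
    · exact pathSeq_succ_of_ne W D h ▸ mem_range_self _

variable {W D x}

theorem pathSeq_eq_of_le {n₀ n : ℕ} (h : pathSeq W D x n₀ = x) (hn : n₀ ≤ n) :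
    pathSeq W D x n = x := by
  induction n, hn using Nat.le_induction with
  | base => exact h
  | succ n _ ih => rw [pathSeq, if_pos ih.symm, ih]

variable [TopologicalSpace X] [T1Space X] (hW : TopologicalSpace.IsTopologicalBasis (range W))
  (hD : DenseRange D) (hx : ∀ n, pathSeq W D x n ≠ x)
include hW hD hx

theorem pathCand_nonempty (n : ℕ) : (pathCand W D x n).Nonempty := by
  have hS : (pathSeq W D x '' Iic n).Finite := (finite_Iic n).image _
  have hxS : x ∈ (pathSeq W D x '' Iic n)ᶜ := fun ⟨k, _, hk⟩ => hx k hk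
  obtain ⟨_, ⟨m, rfl⟩, hxm, hmS⟩ := hW.exists_subset_of_mem_open hxS hS.isClosed.isOpen_compl
  obtain ⟨p, hp⟩ := hD.exists_mem_open (hW.isOpen ⟨m, rfl⟩) ⟨x, hxm⟩
  exact ⟨p, m, hxm, hp, fun k hk hkm => hmS hkm ⟨k, hk, rfl⟩⟩

theorem exists_pathSeq_succ_mem (n : ℕ) :
    ∃ m, x ∈ W m ∧ pathSeq W D x (n + 1) ∈ W m ∧ ∀ k ≤ n, pathSeq W D x k ∉ W m :=
  pathSeq_succ_of_ne W D (hx n).symm ▸ Nat.sInf_mem (pathCand_nonempty hW hD hx n)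

theorem injective_sInf_pathCand : Function.Injective fun n => sInf (pathCand W D x n) := by
  intro n n' h
  by_contra hne
  wlog hlt : n < n' generalizing n n'
  · exact this h.symm (Ne.symm hne) (by omega)
  obtain ⟨m, -, hm, hk⟩ := exists_pathSeq_succ_mem hW hD hx n'
  refine hk (n + 1) hlt ?_
  rwa [pathSeq_succ_of_ne W D (hx n).symm, show sInf (pathCand W D x n) = _ from h,
    ← pathSeq_succ_of_ne W D (hx n').symm]

theorem exists_pathSeq_mem {m : ℕ} (hm : x ∈ W m) : ∃ k, pathSeq W D x k ∈ W m := by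
  by_contra! h
  obtain ⟨q, hq⟩ := hD.exists_mem_open (hW.isOpen ⟨m, rfl⟩) ⟨x, hm⟩
  obtain ⟨n, hn⟩ :=
    ((injective_sInf_pathCand hW hD hx).nat_tendsto_atTop.eventually_gt_atTop q).exists
  exact hn.not_ge (Nat.sInf_le ⟨m, hm, hq, fun k _ => h k⟩)

/-- When the path first enters `W i`, the index `P` is a candidate and every smaller index
points outside `W i`. -/
theorem exists_pathSeq_eq_of_isLeast {i P : ℕ} (hxi : x ∈ W i) (hP : IsLeast {p | D p ∈ W i} P) :
    ∃ n, pathSeq W D x n = D P := by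
  have hent := exists_pathSeq_mem hW hD hx hxi
  obtain ⟨n, hfirst, hbefore⟩ : ∃ n, pathSeq W D x n ∈ W i ∧ ∀ k < n, pathSeq W D x k ∉ W i :=
    ⟨Nat.find hent, Nat.find_spec hent, fun k hk => Nat.find_min hent hk⟩
  refine ⟨n, ?_⟩
  rcases n with _ | n
  · rw [pathSeq_zero] at hfirst ⊢
    rw [Nat.le_zero.1 (hP.2 hfirst)]
  · rw [pathSeq_succ_of_ne W D (hx n).symm] at hfirst ⊢
    refine congrArg D (le_antisymm (Nat.sInf_le ⟨i, hxi, hP.1, fun k hk => ?_⟩) (hP.2 hfirst))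
    exact hbefore k (by omega)

end PathSeq

section PathSeqTendsto

variable {X : Type*} [TopologicalSpace X] [T1Space X] {W : ℕ → Set X} {D : ℕ → X}

theorem tendsto_pathSeq_of_forall_ne (hW : IsGoodBasis W) (hD : DenseRange D) {x : X}
    (hx : ∀ n, pathSeq W D x n ≠ x) : Tendsto (pathSeq W D x) atTop (𝓝 x) := by
  refine tendsto_nhds.2 fun U hU hxU => ?_
  obtain ⟨m₀, hm₀⟩ := hW.2 U hU x hxU
  have hhit : ∀ᶠ n in atTop, ∀ m ∈ Iio m₀, x ∈ W m → ∃ k ≤ n, pathSeq W D x k ∈ W m := by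
    refine (eventually_all_finite (finite_Iio m₀)).2 fun m _ => ?_
    by_cases hxm : x ∈ W m
    · obtain ⟨k, hk⟩ := exists_pathSeq_mem hW.1 hD hx hxm
      exact (eventually_ge_atTop k).mono fun n hn _ => ⟨k, hn, hk⟩
    · exact .of_forall fun _ h => absurd h hxm
  obtain ⟨N, hN⟩ := eventually_atTop.1 hhit
  refine eventually_atTop.2 ⟨N + 1, fun n hn => ?_⟩
  obtain ⟨n, rfl⟩ : ∃ n', n = n' + 1 := ⟨n - 1, by omega⟩
  obtain ⟨m, hxm, hm, hbefore⟩ := exists_pathSeq_succ_mem hW.1 hD hx n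
  refine hm₀ m (not_lt.1 fun hlt => ?_) hxm hm
  obtain ⟨k, hk, hkm⟩ := hN n (by omega) m hlt hxm
  exact hbefore k hk hkm

theorem tendsto_pathSeq (hW : IsGoodBasis W) (hD : DenseRange D) (x : X) :
    Tendsto (pathSeq W D x) atTop (𝓝 x) := by
  by_cases h : ∃ n, pathSeq W D x n = x
  · obtain ⟨n₀, h⟩ := h
    exact tendsto_atTop_of_eventually_const fun n hn => pathSeq_eq_of_le h hn
  · push Not at h
    exact tendsto_pathSeq_of_forall_ne hW hD h

theorem RecoverableWith.mem_range {Y : Type*} [TopologicalSpace Y] [DiscreteTopology Y]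
    {f : X → Y} (hf : RecoverableWith W D f) (hW : IsGoodBasis W) (hD : DenseRange D) {x : X}
    {U : Set X} (hU : U ∈ 𝓝 x) (hxU : ∀ y ∈ U, f y = f x → y = x) : x ∈ range D := by
  have hfx : ∀ᶠ n in atTop, f (pathSeq W D x n) = f x := by
    simpa only [nhds_discrete, tendsto_pure] using hf x
  obtain ⟨n, hfn, hUn⟩ := (hfx.and ((tendsto_pathSeq hW hD x).eventually_mem hU)).exists
  exact hxU _ hUn hfn ▸ pathSeq_mem_range W D x n

end PathSeqTendsto

def prefixRec (F : (ℕ → ℕ) → ℕ → ℕ) (m : ℕ) : ℕ :=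
  F (fun i => if i < m then prefixRec F i else 0) m

theorem prefixRec_eq {F : (ℕ → ℕ) → ℕ → ℕ}
    (hF : ∀ a b m, (∀ i < m, a i = b i) → F a m = F b m) (m : ℕ) :
    prefixRec F m = F (prefixRec F) m := by
  rw [prefixRec]
  exact hF _ _ m fun i hi => if_pos hi

section Diagonal

variable (W : ℕ → Set (ℕ → Bool)) (D : ℕ → ℕ → Bool)

def trapRadius (t : ℕ → Bool) (n : ℕ) : ℕ :=
  sInf {R | ∃ i, t ∈ W i ∧ (∀ p ≤ n, D p ∈ W i → D p = t) ∧ cylinder t R ⊆ W i}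

theorem exists_trapRadius_spec (hW : TopologicalSpace.IsTopologicalBasis (range W))
    (t : ℕ → Bool) (n : ℕ) :
    ∃ i, t ∈ W i ∧ (∀ p ≤ n, D p ∈ W i → D p = t) ∧ cylinder t (trapRadius W D t n) ⊆ W i := by
  have hopen : IsOpen (D '' Iic n \ {t})ᶜ :=
    ((finite_Iic n).image D).sdiff.isClosed.isOpen_compl
  obtain ⟨_, ⟨i, rfl⟩, hti, hi⟩ := hW.exists_subset_of_mem_open (fun h => h.2 rfl) hopen
  obtain ⟨R, -, hR⟩ := (hasBasis_nhds_cylinder t).mem_iff.1 ((hW.isOpen ⟨i, rfl⟩).mem_nhds hti)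
  have hne : ∃ R i, t ∈ W i ∧ (∀ p ≤ n, D p ∈ W i → D p = t) ∧ cylinder t R ⊆ W i :=
    ⟨R, i, hti, fun p hp hpi => by_contra fun hne => hi hpi ⟨⟨p, hp, rfl⟩, hne⟩, hR⟩
  exact Nat.sInf_mem hne

/-- `a m` is chosen, from `finCode a m` alone, so large that `code a` (which agrees with
`finCode a m` below `a m`) lies in a basic set around `finCode a m` containing no other `D p`
with `p ≤ m` or `p` below the first index of `finCode a m` in `D`. -/
def diagSeq : ℕ → ℕ :=
  prefixRec fun b m => trapRadius W D (finCode b m) (max (sInf {p | D p = finCode b m}) m)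

theorem diagSeq_eq (m : ℕ) :
    diagSeq W D m = trapRadius W D (finCode (diagSeq W D) m)
      (max (sInf {p | D p = finCode (diagSeq W D) m}) m) :=
  prefixRec_eq (fun _ _ _ h => by rw [finCode_congr h]) m

variable {W D}

theorem finCode_mem_range_of_recoverableWith {a : ℕ → ℕ}
    (hf : RecoverableWith W D (finCodeIndicator a)) (hW : IsGoodBasis W) (hD : DenseRange D)
    (m : ℕ) : finCode a m ∈ range D := by
  refine hf.mem_range hW hD ((isOpen_cylinder _ _ (mark a (m + 1) + 1)).mem_nhds
    (self_mem_cylinder _ _)) fun y hy hfy => ?_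
  rw [finCodeIndicator_finCode.2 fun _ _ => rfl, finCodeIndicator_eq_true_iff] at hfy
  obtain ⟨m', rfl⟩ := hfy
  rw [eq_of_finCode_mem_cylinder hy]

theorem exists_trap_diagSeq (hW : TopologicalSpace.IsTopologicalBasis (range W)) {m : ℕ}
    (hm : finCode (diagSeq W D) m ∈ range D) :
    ∃ i, code (diagSeq W D) ∈ W i ∧
      IsLeast {p | D p ∈ W i} (sInf {p | D p = finCode (diagSeq W D) m}) ∧
      D m ≠ code (diagSeq W D) := by
  set a := diagSeq W D
  obtain ⟨i, hti, hexcl, hcyl⟩ :=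
    exists_trapRadius_spec W D hW (finCode a m) (max (sInf {p | D p = finCode a m}) m)
  rw [← diagSeq_eq] at hcyl
  have hxi : code a ∈ W i := hcyl <| mem_cylinder_iff.2 fun j hj =>
    (finCode_eq_code_of_lt (hj.trans (lt_mark_succ a m))).symm
  have hP : D (sInf {p | D p = finCode a m}) = finCode a m := Nat.sInf_mem hm
  refine ⟨i, hxi, ⟨show D _ ∈ W i by rwa [hP], fun p hp => not_lt.1 fun hlt => ?_⟩, fun hDm => ?_⟩
  · exact hlt.not_ge (Nat.sInf_le (hexcl p (by omega) hp))
  · exact code_ne_finCode a a m (hDm ▸ hexcl m (le_max_right _ _) (hDm ▸ hxi))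

theorem not_exists_uniformlyRecoverable :
    ¬ ∃ W : ℕ → Set (ℕ → Bool), IsGoodBasis W ∧ ∃ D : ℕ → (ℕ → Bool), DenseRange D ∧
      ∀ f ∈ range finCodeIndicator, RecoverableWith W D f := by
  rintro ⟨W, hW, D, hD, hrec⟩
  set a := diagSeq W D
  have hrecA : RecoverableWith W D (finCodeIndicator a) := hrec _ ⟨a, rfl⟩
  have hmem := finCode_mem_range_of_recoverableWith hrecA hW hD
  have hx : ∀ n, pathSeq W D (code a) n ≠ code a := fun n hn => by
    obtain ⟨j, hj⟩ := hn ▸ pathSeq_mem_range W D (code a) n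
    obtain ⟨-, -, -, hne⟩ := exists_trap_diagSeq hW.1 (hmem j)
    exact hne hj
  have hvisit : ∀ m, ∃ n, pathSeq W D (code a) n = finCode a m := fun m => by
    obtain ⟨i, hxi, hP, -⟩ := exists_trap_diagSeq hW.1 (hmem m)
    obtain ⟨n, hn⟩ := exists_pathSeq_eq_of_isLeast hW.1 hD hx hxi hP
    exact ⟨n, hn.trans (Nat.sInf_mem (hmem m))⟩
  choose ν hν using hvisit
  have hν_inj : Function.Injective ν := fun m m' h => (finCode_inj (by rw [← hν, ← hν, h])).1
  have hfreq : ∃ᶠ n in atTop, finCodeIndicator a (pathSeq W D (code a) n) = true :=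
    Nat.frequently_atTop_iff_infinite.2 <| (infinite_range_of_injective hν_inj).mono <|
      range_subset_iff.2 fun m => finCodeIndicator_eq_true_iff.2 ⟨m, (hν m).symm⟩
  have hev : ∀ᶠ n in atTop, finCodeIndicator a (pathSeq W D (code a) n) = false := by
    simpa only [nhds_discrete, tendsto_pure, finCodeIndicator_code] using hrecA (code a)
  obtain ⟨n, htrue, hfalse⟩ := (hfreq.and_eventually hev).exists
  exact Bool.noConfusion (htrue.symm.trans hfalse)

end Diagonal

/-- There is a set `A ⊆ B₁(2^ω, 2)` (pointwise convergence topology), homeomorphic to the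
Baire space `ℕ → ℕ`, which is not uniformly recoverable, and yet the evaluation map
`φ(x,f) = f(x)` on `2^ω × A` is Baire class one. -/
theorem exists_baireHomeomorphic_not_uniformlyRecoverable_eval_baireClassOne :
    ∃ A : Set ((ℕ → Bool) → Bool),
      (∀ f ∈ A, BaireClassOneFn f) ∧
      Nonempty (↥A ≃ₜ (ℕ → ℕ)) ∧
      ¬ (∃ W : ℕ → Set (ℕ → Bool), IsGoodBasis W ∧
          ∃ D : ℕ → (ℕ → Bool), DenseRange D ∧ ∀ f ∈ A, RecoverableWith W D f) ∧
      BaireClassOneFn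
        (fun p : (ℕ → Bool) × ↥A => (p.2 : (ℕ → Bool) → Bool) p.1) := by
  set e := isEmbedding_finCodeIndicator.toHomeomorph
  have he (f : range finCodeIndicator) : (f : (ℕ → Bool) → Bool) = finCodeIndicator (e.symm f) := by
    conv_lhs => rw [← e.apply_symm_apply f]
    rfl
  refine ⟨range finCodeIndicator, ?_, ⟨e.symm⟩, not_exists_uniformlyRecoverable, ?_⟩
  · rintro _ ⟨a, rfl⟩
    exact baireClassOneFn_finCodeIndicator_uncurry.comp_continuous
      (continuous_id.prodMk continuous_const)
  · have heval :
        (fun p : (ℕ → Bool) × range finCodeIndicator => (p.2 : (ℕ → Bool) → Bool) p.1) =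
        (fun p : (ℕ → Bool) × (ℕ → ℕ) => finCodeIndicator p.2 p.1) ∘ Prod.map id e.symm := by
      funext p
      exact congrFun (he p.2) p.1
    rw [heval]
    exact baireClassOneFn_finCodeIndicator_uncurry.comp_continuous
      (continuous_id.prodMap e.symm.continuous)
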